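/- (Reward-shaping tolerance bound) Let M be a finite MDP with reward r and M̂ the same MDP with reward r + r̂, where 0 < r̂(s,s') ≤ (1−γ)ε for all s,s'. Let π̂ be an optimal policy for M̂. Then for every state s, V^π̂_M(s) ≥ V*_M(s) − ε, where V^π̂_M is the value of π̂ evaluated in M and V*_M is the optimal value of M. -/
import Mathlib


open Finset

noncomputable def fmax {α : Type*} [Fintype α] [Nonempty α] (f : α → ℝ) : ℝ :=
  Finset.univ.sup' Finset.univ_nonempty f

lemma le_fmax' {α : Type*} [Fintype α] [Nonempty α] (f : α → ℝ) (a : α) : f a ≤ fmax f :=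
  Finset.le_sup' f (Finset.mem_univ a)

lemma fmax_le' {α : Type*} [Fintype α] [Nonempty α] {f : α → ℝ} {b : ℝ}
    (h : ∀ a, f a ≤ b) : fmax f ≤ b :=
  Finset.sup'_le _ _ fun a _ => h a

lemma exists_fmax' {α : Type*} [Fintype α] [Nonempty α] (f : α → ℝ) : ∃ a, fmax f = f a := by
  obtain ⟨a, _, ha⟩ := Finset.exists_mem_eq_sup' Finset.univ_nonempty f
  exact ⟨a, ha⟩

theorem stmt11
    {S A : Type*} [Fintype S] [Nonempty S] [Fintype A] [Nonempty A]
    (P : S → A → S → ℝ) (r rhat : S → S → ℝ) (γ ε : ℝ)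
    (hγ0 : 0 ≤ γ) (hγ1 : γ < 1)
    (hPnn : ∀ s a s', 0 ≤ P s a s')
    (hPsum : ∀ s a, ∑ s', P s a s' = 1)
    (hrhat : ∀ s s', 0 < rhat s s' ∧ rhat s s' ≤ (1 - γ) * ε)
    -- optimal Q-function of M (reward r)
    (QM : S → A → ℝ)
    (hQM : ∀ s a, QM s a =
      ∑ s', P s a s' * (r s s' + γ * fmax (fun a' => QM s' a')))
    -- optimal Q-function of M̂ (reward r + rhat)
    (Qhat : S → A → ℝ)
    (hQhat : ∀ s a, Qhat s a =
      ∑ s', P s a s' * (r s s' + rhat s s' + γ * fmax (fun a' => Qhat s' a')))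
    -- π̂ is an optimal (greedy) policy for M̂
    (πhat : S → A)
    (hπhat : ∀ s a, Qhat s a ≤ Qhat s (πhat s))
    -- value of π̂ evaluated in M
    (Vpi : S → ℝ)
    (hVpi : ∀ s, Vpi s = ∑ s', P s (πhat s) s' * (r s s' + γ * Vpi s')) :
    ∀ s, Vpi s ≥ fmax (fun a => QM s a) - ε := by
  set D : S → ℝ := fun s => fmax (fun a => QM s a) - fmax (fun a => Qhat s a) with hD
  set E : S → ℝ := fun s => fmax (fun a => Qhat s a) - Vpi s with hE
  -- Claim 1: fmax D ≤ 0
  have hMD : fmax D ≤ 0 := by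
    obtain ⟨s0, hs0⟩ := exists_fmax' D
    obtain ⟨a0, ha0⟩ := exists_fmax' (fun a => QM s0 a)
    have key : D s0 ≤ γ * fmax D := by
      have h1 : D s0 ≤ QM s0 a0 - Qhat s0 a0 := by
        have h2 := le_fmax' (fun a => Qhat s0 a) a0
        simp only [hD, ha0]
        linarith
      refine h1.trans ?_
      rw [hQM, hQhat, ← Finset.sum_sub_distrib]
      calc ∑ s', (P s0 a0 s' * (r s0 s' + γ * fmax (fun a' => QM s' a')) -
              P s0 a0 s' * (r s0 s' + rhat s0 s' + γ * fmax (fun a' => Qhat s' a')))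
          ≤ ∑ s', P s0 a0 s' * (γ * fmax D) := by
            apply Finset.sum_le_sum
            intro s' _
            have hds := le_fmax' D s'
            have hr := (hrhat s0 s').1
            have hP := hPnn s0 a0 s'
            have : γ * D s' - rhat s0 s' ≤ γ * fmax D := by nlinarith
            have h3 : P s0 a0 s' * (γ * D s' - rhat s0 s') ≤ P s0 a0 s' * (γ * fmax D) :=
              mul_le_mul_of_nonneg_left this hP
            simp only [hD] at h3 ⊢
            ring_nf
            ring_nf at h3
            linarith
        _ = γ * fmax D := by rw [← Finset.sum_mul, hPsum, one_mul]
    rw [hs0] at *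
    nlinarith
  -- Claim 2: fmax E ≤ ε
  have hME : fmax E ≤ ε := by
    obtain ⟨s1, hs1⟩ := exists_fmax' E
    have hg : fmax (fun a => Qhat s1 a) = Qhat s1 (πhat s1) :=
      le_antisymm (fmax_le' (hπhat s1)) (le_fmax' _ _)
    have key : E s1 ≤ (1 - γ) * ε + γ * fmax E := by
      have : E s1 = Qhat s1 (πhat s1) - Vpi s1 := by simp only [hE, hg]
      rw [this, hQhat, hVpi, ← Finset.sum_sub_distrib]
      calc ∑ s', (P s1 (πhat s1) s' * (r s1 s' + rhat s1 s' + γ * fmax (fun a' => Qhat s' a')) -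
              P s1 (πhat s1) s' * (r s1 s' + γ * Vpi s'))
          ≤ ∑ s', P s1 (πhat s1) s' * ((1 - γ) * ε + γ * fmax E) := by
            apply Finset.sum_le_sum
            intro s' _
            have hes := le_fmax' E s'
            have hr := (hrhat s1 s').2
            have hP := hPnn s1 (πhat s1) s'
            have : rhat s1 s' + γ * E s' ≤ (1 - γ) * ε + γ * fmax E := by nlinarith
            have h3 : P s1 (πhat s1) s' * (rhat s1 s' + γ * E s') ≤
                P s1 (πhat s1) s' * ((1 - γ) * ε + γ * fmax E) :=
              mul_le_mul_of_nonneg_left this hP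
            simp only [hE] at h3 ⊢
            ring_nf
            ring_nf at h3
            linarith
        _ = (1 - γ) * ε + γ * fmax E := by rw [← Finset.sum_mul, hPsum, one_mul]
    rw [hs1] at *
    nlinarith
  intro s
  have h1 := le_fmax' D s |>.trans hMD
  have h2 := le_fmax' E s |>.trans hME
  simp only [hD, hE] at h1 h2
  linarith
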